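/- arXiv:1712.07483 — 2 statements merged into one kernel-verified Lean document; each statement's English description precedes it below -/
import Mathlib

section
/- For all natural numbers n and r with n ≥ 2r+1, Σ_{i=1}^{n−2r} q^{(r+1)(n−2r−i)} · [r−1+i choose r]_q · [n−r−i choose r]_q = [n choose 2r+1]_q, as an identity of polynomials in q. -/
open Polynomial

/-- The Gaussian binomial coefficient `[n choose k]_q` as a polynomial in `q` over `ℤ`,
defined via the `q`-Pascal recurrence; it agrees with the product formula
`∏_{i=1}^{k} (q^{n-k+i} − 1)/(q^i − 1)`. -/
noncomputable def gaussBinomial : ℕ → ℕ → Polynomial ℤ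
  | _, 0 => 1
  | 0, _ + 1 => 0
  | n + 1, k + 1 => gaussBinomial n k + Polynomial.X ^ (k + 1) * gaussBinomial n (k + 1)

lemma gB_zero (n : ℕ) : gaussBinomial n 0 = 1 := by cases n <;> rfl

lemma gB_succ_succ (n k : ℕ) :
    gaussBinomial (n+1) (k+1) = gaussBinomial n k + X ^ (k+1) * gaussBinomial n (k+1) := rfl

lemma gB_eq_zero : ∀ n k, n < k → gaussBinomial n k = 0
  | 0, _+1, _ => rfl
  | n+1, k+1, h => by
      rw [gB_succ_succ, gB_eq_zero n k (by omega), gB_eq_zero n (k+1) (by omega)]; ring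

lemma gB_self : ∀ n, gaussBinomial n n = 1
  | 0 => rfl
  | n+1 => by rw [gB_succ_succ, gB_self n, gB_eq_zero n (n+1) (by omega)]; ring

lemma gB_pascal2 : ∀ n, ∀ k ≤ n,
    gaussBinomial (n+1) (k+1) = X ^ (n - k) * gaussBinomial n k + gaussBinomial n (k+1) := by
  intro n
  induction n with
  | zero =>
    intro k hk
    interval_cases k
    rw [gB_succ_succ, gB_zero, gB_eq_zero 0 1 (by omega)]
    simp
  | succ n ih =>
    intro k hk
    rcases Nat.lt_or_ge k (n+1) with hlt | hge
    · have hk' : k ≤ n := by omega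
      cases k with
      | zero =>
        have h0 := ih 0 (Nat.zero_le n)
        rw [gB_zero] at h0
        simp only [Nat.sub_zero] at h0
        have E : gaussBinomial (n+1) (0+1) = 1 + X^(0+1) * gaussBinomial n (0+1) := by
          rw [gB_succ_succ, gB_zero]
        rw [gB_succ_succ, gB_zero]
        simp only [Nat.sub_zero]
        linear_combination X^(0+1) * h0 - E
      | succ k' =>
        have h1 := ih k' (by omega)
        have h2 := ih (k'+1) (by omega)
        obtain ⟨d, hd⟩ : ∃ d, n - (k'+1) = d := ⟨_, rfl⟩
        have hd1 : n - k' = d + 1 := by omega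
        have hg : n + 1 - (k'+1) = d + 1 := by omega
        rw [hd] at h2
        rw [hd1] at h1
        rw [hg]
        linear_combination (gB_succ_succ (n+1) (k'+1)) + h1 - X^(d+1) * (gB_succ_succ n k')
          + X^(k'+2) * h2 - (gB_succ_succ n (k'+1))
    · have : k = n + 1 := by omega
      subst this
      rw [gB_self, gB_eq_zero (n+1) (n+2) (by omega), gB_self]
      simp

lemma gB_symm : ∀ n, ∀ k ≤ n, gaussBinomial n (n - k) = gaussBinomial n k := by
  intro n
  induction n with
  | zero => intro k hk; interval_cases k; rfl
  | succ n ih =>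
    intro k hk
    cases k with
    | zero => rw [Nat.sub_zero, gB_self, gB_zero]
    | succ k' =>
      rcases Nat.lt_or_ge (k'+1) (n+1) with hlt | hge
      · have hk' : k' + 1 ≤ n := by omega
        have hrw : n + 1 - (k'+1) = (n - (k'+1)) + 1 := by omega
        rw [hrw, gB_pascal2 n (n - (k'+1)) (by omega)]
        have e1 : n - (n - (k'+1)) = k' + 1 := by omega
        rw [e1, ih (k'+1) hk']
        have e3 : gaussBinomial n (n - (k'+1) + 1) = gaussBinomial n k' := by
          have h4 : n - (k'+1) + 1 = n - k' := by omega
          rw [h4, ih k' (by omega)]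
        rw [e3, gB_succ_succ]
        ring
      · have hh : k' + 1 = n + 1 := by omega
        rw [hh, Nat.sub_self, gB_zero, gB_self]

lemma gB_symm' (a b : ℕ) : gaussBinomial (a+b) a = gaussBinomial (a+b) b := by
  have h := gB_symm (a+b) b (by omega)
  rwa [show a + b - b = a by omega] at h

lemma gB_conv : ∀ s r m,
    (∑ j ∈ Finset.range (m+1),
      X ^ ((s+1)*j) * gaussBinomial (r+j) j * gaussBinomial (s+(m-j)) (m-j))
      = gaussBinomial (r+s+m+1) m := by
  intro s
  induction s with
  | zero =>
    intro r m
    induction m with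
    | zero => simp [gB_zero, gB_self]
    | succ m ihm =>
      rw [Finset.sum_range_succ]
      have hcongr : ∀ j ∈ Finset.range (m+1),
          X ^ ((0+1)*j) * gaussBinomial (r+j) j * gaussBinomial (0+(m+1-j)) (m+1-j)
          = X ^ ((0+1)*j) * gaussBinomial (r+j) j * gaussBinomial (0+(m-j)) (m-j) := by
        intro j hj
        simp only [zero_add]
        rw [gB_self, gB_self]
      rw [Finset.sum_congr rfl hcongr, ihm]
      simp only [Nat.sub_self, gB_zero, mul_one]
      have hr : r + 0 + (m+1) + 1 = (r + 0 + m + 1) + 1 := by omega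
      rw [hr, gB_succ_succ]
      have hr2 : r + (m+1) = r + 0 + m + 1 := by omega
      rw [hr2]
      ring
  | succ t iht =>
    intro r m
    induction m with
    | zero => simp [gB_zero]
    | succ m ihm =>
      rw [Finset.sum_range_succ]
      have key : ∀ j ∈ Finset.range (m+1),
          X ^ ((t+1+1)*j) * gaussBinomial (r+j) j * gaussBinomial (t+1+(m+1-j)) (m+1-j)
          = X ^ ((t+1+1)*j) * gaussBinomial (r+j) j * gaussBinomial (t+1+(m-j)) (m-j)
            + X^(m+1) * (X ^ ((t+1)*j) * gaussBinomial (r+j) j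
                * gaussBinomial (t+(m+1-j)) (m+1-j)) := by
        intro j hj
        rw [Finset.mem_range] at hj
        obtain ⟨d, hd⟩ : ∃ d, m - j = d := ⟨_, rfl⟩
        have h1 : m + 1 - j = d + 1 := by omega
        have hm : (m+1 : ℕ) = j + (d+1) := by omega
        rw [hd, h1, hm]
        have h2 : t + 1 + (d+1) = (t + 1 + d) + 1 := by omega
        rw [h2, gB_succ_succ]
        have h3 : t + (d+1) = t + 1 + d := by omega
        rw [h3]
        ring
      rw [Finset.sum_congr rfl key, Finset.sum_add_distrib, ihm, ← Finset.mul_sum]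
      simp only [Nat.sub_self, gB_zero, mul_one]
      have IHouter := iht r (m+1)
      rw [Finset.sum_range_succ] at IHouter
      simp only [Nat.sub_self, gB_zero, mul_one] at IHouter
      have D : gaussBinomial (r+(t+1)+(m+1)+1) (m+1)
          = gaussBinomial (r+t+m+2) m + X^(m+1) * gaussBinomial (r+t+m+2) (m+1) := by
        rw [show r+(t+1)+(m+1)+1 = (r+t+m+2)+1 from by omega, gB_succ_succ]
      rw [show r+(t+1)+m+1 = r+t+m+2 from by omega]
      rw [show r+t+(m+1)+1 = r+t+m+2 from by omega] at IHouter
      linear_combination X^(m+1) * IHouter - D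

theorem gaussBinomial_sum_median_domino (n r : ℕ) (h : 2 * r + 1 ≤ n) :
    ∑ i ∈ Finset.Icc 1 (n - 2 * r),
        X ^ ((r + 1) * (n - 2 * r - i)) *
          gaussBinomial (r - 1 + i) r * gaussBinomial (n - r - i) r =
      gaussBinomial n (2 * r + 1) := by
  obtain ⟨m, rfl⟩ : ∃ m, n = 2*r+1+m := ⟨n - (2*r+1), by omega⟩
  have hI : 2*r+1+m - 2*r = m + 1 := by omega
  rw [hI]
  have hR : gaussBinomial (2*r+1+m) (2*r+1) = gaussBinomial (2*r+1+m) m := by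
    have h2 := gB_symm (2*r+1+m) (2*r+1) (by omega)
    rw [show 2*r+1+m - (2*r+1) = m from by omega] at h2
    exact h2.symm
  have hc := gB_conv r r m
  rw [show r+r+m+1 = 2*r+1+m from by omega] at hc
  rw [hR, ← hc]
  refine Finset.sum_nbij' (fun i => m + 1 - i) (fun j => m + 1 - j) ?_ ?_ ?_ ?_ ?_
  · intro a ha
    simp only [Finset.mem_Icc, Finset.mem_range] at ha ⊢
    omega
  · intro a ha
    simp only [Finset.mem_Icc, Finset.mem_range] at ha ⊢
    omega
  · intro a ha
    simp only [Finset.mem_Icc] at ha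
    omega
  · intro a ha
    simp only [Finset.mem_range] at ha
    omega
  · intro a ha
    simp only [Finset.mem_Icc] at ha
    have e1 : 2*r+1+m - r - a = r + (m+1-a) := by omega
    have e2 : m - (m+1-a) = a - 1 := by omega
    rw [e1, e2]
    have s1 : gaussBinomial (r+(m+1-a)) r = gaussBinomial (r+(m+1-a)) (m+1-a) :=
      gB_symm' r (m+1-a)
    have s2 : gaussBinomial (r-1+a) r = gaussBinomial (r+(a-1)) (a-1) := by
      cases r with
      | zero =>
        rw [gB_zero, zero_add, gB_self]
      | succ r' =>
        rw [show r'+1-1+a = r'+1+(a-1) from by omega]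
        exact gB_symm' (r'+1) (a-1)
    rw [s1, s2]
    ring
end

section
/- For all natural numbers n and k with k ≤ n, the Gaussian binomial coefficient is the generating function for integer partitions fitting in a k × (n−k) box: [n choose k]_q = Σ over partitions λ with at most k parts, each part of size at most n−k, of q^{|λ|}, where |λ| is the sum of the parts of λ. -/
open Polynomial

private def boxCount (k b m : ℕ) : ℕ :=
  (Finset.univ.filter fun p : Nat.Partition m =>
    p.parts.card ≤ k ∧ ∀ x ∈ p.parts, x ≤ b).card

private def exactCount (k b m : ℕ) : ℕ :=
  (Finset.univ.filter fun p : Nat.Partition m =>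
    p.parts.card = k ∧ ∀ x ∈ p.parts, x ≤ b).card

private lemma boxCount_m_zero (k b : ℕ) : boxCount k b 0 = 1 := by
  unfold boxCount
  have h : ∀ p : Nat.Partition 0, p.parts = 0 := by
    intro p
    rw [Multiset.eq_zero_iff_forall_notMem]
    intro x hx
    have h1 := p.parts_pos hx
    have h2 : x ≤ p.parts.sum := Multiset.single_le_sum (fun y _ => Nat.zero_le y) x hx
    rw [p.parts_sum] at h2
    omega
  rw [Finset.filter_true_of_mem]
  · simp
  · intro p _
    simp [h p]

private lemma boxCount_eq_zero (k b m : ℕ) (h : k * b < m) : boxCount k b m = 0 := by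
  unfold boxCount
  rw [Finset.card_eq_zero, Finset.filter_eq_empty_iff]
  rintro p - ⟨h1, h2⟩
  have h3 := Multiset.sum_le_card_nsmul p.parts b h2
  rw [p.parts_sum, smul_eq_mul] at h3
  have h4 : p.parts.card * b ≤ k * b := Nat.mul_le_mul_right b h1
  omega

private lemma exactCount_eq_zero (k b m : ℕ) (h : m < k) : exactCount k b m = 0 := by
  unfold exactCount
  rw [Finset.card_eq_zero, Finset.filter_eq_empty_iff]
  rintro p - ⟨h1, -⟩
  have h3 : p.parts.card • 1 ≤ p.parts.sum :=
    Multiset.card_nsmul_le_sum (fun x hx => p.parts_pos hx)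
  rw [p.parts_sum, smul_eq_mul, mul_one] at h3
  omega

private lemma boxCount_succ (k b m : ℕ) :
    boxCount (k + 1) b m = boxCount k b m + exactCount (k + 1) b m := by
  classical
  unfold boxCount exactCount
  rw [← Finset.card_union_of_disjoint]
  · congr 1
    ext p
    simp only [Finset.mem_filter, Finset.mem_union, Finset.mem_univ, true_and, Nat.le_succ_iff]
    tauto
  · rw [Finset.disjoint_left]
    intro p hp hq
    simp only [Finset.mem_filter] at hp hq
    omega

private lemma sum_map_add_one (s : Multiset ℕ) :
    (s.map (· + 1)).sum = s.sum + Multiset.card s := by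
  have h : (s.map fun x => id x + (fun _ => 1) x).sum
      = (s.map id).sum + (s.map fun _ => 1).sum := Multiset.sum_map_add
  simpa using h

private lemma sum_sub_one (s : Multiset ℕ) (hs : ∀ x ∈ s, 0 < x) :
    (s.map (· - 1)).sum + Multiset.card s = s.sum := by
  have h1 : (s.map (· - 1)).sum + (s.map fun _ => 1).sum = (s.map fun x => (x - 1) + 1).sum :=
    Multiset.sum_map_add.symm
  have h2 : (s.map fun x => (x - 1) + 1).sum = s.sum := by
    rw [Multiset.map_congr rfl (fun x hx => by have := hs x hx; omega : ∀ x ∈ s, (x-1)+1 = x)]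
    rw [Multiset.map_id']
  have h3 : (s.map fun _ => 1).sum = Multiset.card s := by simp
  rw [h2, h3] at h1
  exact h1

private lemma exact_eq_box (k b j : ℕ) :
    (Finset.univ.filter fun p : Nat.Partition (k + 1 + j) =>
      p.parts.card = k + 1 ∧ ∀ x ∈ p.parts, x ≤ b + 1).card =
    (Finset.univ.filter fun q : Nat.Partition j =>
      q.parts.card ≤ k + 1 ∧ ∀ x ∈ q.parts, x ≤ b).card := by
  classical
  refine Finset.card_bij'
    (fun p hp => ⟨(p.parts.map (· - 1)).filter (· ≠ 0), ?_, ?_⟩)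
    (fun q hq => ⟨q.parts.map (· + 1) + Multiset.replicate (k + 1 - q.parts.card) 1, ?_, ?_⟩)
    ?_ ?_ ?_ ?_
  · -- pos of forward
    intro i hi
    rw [Multiset.mem_filter] at hi
    omega
  · -- sum of forward
    simp only [Finset.mem_filter, Finset.mem_univ, true_and] at hp
    have hsplit := Multiset.filter_add_not (· ≠ 0) (p.parts.map (· - 1))
    have h0 : ((p.parts.map (· - 1)).filter (fun x => ¬ x ≠ 0)).sum = 0 :=
      Multiset.sum_eq_zero (by intro x hx; rw [Multiset.mem_filter] at hx; tauto)
    have h1 : ((p.parts.map (· - 1)).filter (· ≠ 0)).sum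
        + ((p.parts.map (· - 1)).filter (fun x => ¬ x ≠ 0)).sum = (p.parts.map (· - 1)).sum := by
      rw [← Multiset.sum_add, hsplit]
    have h2 := sum_sub_one p.parts (fun x hx => p.parts_pos hx)
    have h3 := p.parts_sum
    have h4 : Multiset.card (p.parts.map (· - 1)) = Multiset.card p.parts := by simp
    omega
  · -- pos of backward
    intro i hi
    rw [Multiset.mem_add] at hi
    rcases hi with hi | hi
    · rcases Multiset.mem_map.mp hi with ⟨x, -, rfl⟩; omega
    · rw [Multiset.eq_of_mem_replicate hi]; omega
  · -- sum of backward
    simp only [Finset.mem_filter, Finset.mem_univ, true_and] at hq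
    rw [Multiset.sum_add, sum_map_add_one, Multiset.sum_replicate, q.parts_sum, smul_eq_mul]
    omega
  · -- forward lands in target
    intro p hp
    simp only [Finset.mem_filter, Finset.mem_univ, true_and] at hp ⊢
    constructor
    · have h1 : Multiset.card ((p.parts.map (· - 1)).filter (· ≠ 0))
          ≤ Multiset.card (p.parts.map (· - 1)) := Multiset.card_le_card (Multiset.filter_le _ _)
      simp only [Multiset.card_map] at h1
      omega
    · intro x hx
      rw [Multiset.mem_filter, Multiset.mem_map] at hx
      rcases hx with ⟨⟨y, hy, rfl⟩, -⟩
      have := hp.2 y hy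
      omega
  · -- backward lands in source
    intro q hq
    simp only [Finset.mem_filter, Finset.mem_univ, true_and] at hq ⊢
    constructor
    · rw [Multiset.card_add, Multiset.card_map, Multiset.card_replicate]
      omega
    · intro x hx
      rw [Multiset.mem_add] at hx
      rcases hx with hx | hx
      · rcases Multiset.mem_map.mp hx with ⟨y, hy, rfl⟩
        have := hq.2 y hy
        omega
      · rw [Multiset.eq_of_mem_replicate hx]
        omega
  · -- left inverse
    intro p hp
    simp only [Finset.mem_filter, Finset.mem_univ, true_and] at hp
    apply Nat.Partition.ext
    simp only
    have hfm : (p.parts.map (· - 1)).filter (· ≠ 0)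
        = (p.parts.filter fun x => x - 1 ≠ 0).map (· - 1) :=
      Multiset.filter_map (· ≠ 0) (· - 1) p.parts
    rw [hfm]
    have hmm : ((p.parts.filter fun x => x - 1 ≠ 0).map (· - 1)).map (· + 1)
        = p.parts.filter fun x => x - 1 ≠ 0 := by
      rw [Multiset.map_map]
      rw [Multiset.map_congr rfl (fun x hx => by
        have := p.parts_pos (Multiset.mem_of_mem_filter hx)
        show ((· + 1) ∘ (· - 1)) x = x
        simp only [Function.comp]
        omega)]
      exact Multiset.map_id' _
    rw [hmm, Multiset.card_map]
    have hcard : Multiset.card (p.parts.filter fun x => x - 1 ≠ 0)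
        + Multiset.card (p.parts.filter fun x => ¬ x - 1 ≠ 0) = k + 1 := by
      rw [← Multiset.card_add, Multiset.filter_add_not, hp.1]
    have hrep : p.parts.filter (fun x => ¬ x - 1 ≠ 0)
        = Multiset.replicate (Multiset.card (p.parts.filter fun x => ¬ x - 1 ≠ 0)) 1 := by
      rw [Multiset.eq_replicate_card]
      intro x hx
      have h1 := p.parts_pos (Multiset.mem_of_mem_filter hx)
      have h2 := Multiset.of_mem_filter hx
      omega
    have : k + 1 - Multiset.card (p.parts.filter fun x => x - 1 ≠ 0)
        = Multiset.card (p.parts.filter fun x => ¬ x - 1 ≠ 0) := by omega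
    rw [this, ← hrep, Multiset.filter_add_not]
  · -- right inverse
    intro q hq
    simp only [Finset.mem_filter, Finset.mem_univ, true_and] at hq
    apply Nat.Partition.ext
    simp only
    rw [Multiset.map_add, Multiset.map_replicate, Multiset.map_map]
    have h1 : q.parts.map ((· - 1) ∘ (· + 1)) = q.parts := by
      rw [Multiset.map_congr rfl (fun x _ => by show ((· - 1) ∘ (· + 1)) x = x; simp)]
      exact Multiset.map_id' _
    rw [h1, Multiset.filter_add]
    have h2 : q.parts.filter (· ≠ 0) = q.parts :=
      Multiset.filter_eq_self.mpr (fun x hx => by have := q.parts_pos hx; omega)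
    rw [h2]
    have h3 : Multiset.filter (fun x => ¬x = 0) (Multiset.replicate (k + 1 - Multiset.card q.parts) (0:ℕ)) = 0 :=
      Multiset.filter_eq_nil.mpr (fun a ha => by rw [Multiset.eq_of_mem_replicate ha]; simp)
    rw [h3, add_zero]

private lemma exactCount_add (k b j : ℕ) :
    exactCount (k + 1) (b + 1) (k + 1 + j) = boxCount (k + 1) b j := by
  unfold exactCount boxCount
  exact exact_eq_box k b j

private noncomputable def gbSum (k b : ℕ) : Polynomial ℤ :=
  ∑ m ∈ Finset.range (k * b + 1), (boxCount k b m : Polynomial ℤ) * X ^ m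

private lemma gbSum_ext (k b N : ℕ) (h : k * b + 1 ≤ N) :
    gbSum k b = ∑ m ∈ Finset.range N, (boxCount k b m : Polynomial ℤ) * X ^ m := by
  unfold gbSum
  apply Finset.sum_subset (Finset.range_subset_range.mpr h)
  intro m _ hm
  rw [Finset.mem_range, not_lt] at hm
  rw [boxCount_eq_zero k b m (by omega)]
  simp

private lemma gbSum_left_zero (b : ℕ) : gbSum 0 b = 1 := by
  unfold gbSum
  simp [boxCount_m_zero]

private lemma gbSum_right_zero (k : ℕ) : gbSum k 0 = 1 := by
  unfold gbSum
  simp [boxCount_m_zero]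

private lemma gbSum_rec (k b : ℕ) :
    gbSum (k + 1) (b + 1) = gbSum k (b + 1) + X ^ (k + 1) * gbSum (k + 1) b := by
  rw [show gbSum (k + 1) (b + 1) = ∑ m ∈ Finset.range ((k + 1) + ((k + 1) * b + 1)),
      (boxCount (k + 1) (b + 1) m : Polynomial ℤ) * X ^ m from
    gbSum_ext _ _ _ (by rw [Nat.mul_succ]; omega)]
  have step : ∀ m, (boxCount (k + 1) (b + 1) m : Polynomial ℤ) * X ^ m
      = (boxCount k (b + 1) m : Polynomial ℤ) * X ^ m
        + (exactCount (k + 1) (b + 1) m : Polynomial ℤ) * X ^ m := by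
    intro m
    rw [boxCount_succ]
    push_cast
    ring
  rw [Finset.sum_congr rfl (fun m _ => step m), Finset.sum_add_distrib]
  congr 1
  · refine (gbSum_ext k (b + 1) _ ?_).symm
    have h1 : k * (b + 1) = k * b + k := by ring
    have h2 : (k + 1) * b = k * b + b := by ring
    omega
  · rw [Finset.sum_range_add]
    have hz : ∑ m ∈ Finset.range (k + 1),
        (exactCount (k + 1) (b + 1) m : Polynomial ℤ) * X ^ m = 0 := by
      apply Finset.sum_eq_zero
      intro m hm
      rw [Finset.mem_range] at hm
      rw [exactCount_eq_zero (k + 1) (b + 1) m (by omega)]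
      simp
    rw [hz, zero_add]
    rw [Finset.sum_congr rfl (fun i _ => by
      rw [exactCount_add, pow_add]
      ring : ∀ i ∈ Finset.range ((k + 1) * b + 1),
        (exactCount (k + 1) (b + 1) (k + 1 + i) : Polynomial ℤ) * X ^ (k + 1 + i)
          = X ^ (k + 1) * ((boxCount (k + 1) b i : Polynomial ℤ) * X ^ i))]
    rw [← Finset.mul_sum]
    rfl

private lemma gauss_eq_zero : ∀ n k : ℕ, n < k → gaussBinomial n k = 0 := by
  intro n
  induction n with
  | zero =>
    intro k hk
    cases k with
    | zero => omega
    | succ k => rfl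
  | succ n ih =>
    intro k hk
    cases k with
    | zero => omega
    | succ k =>
      show gaussBinomial n k + X ^ (k + 1) * gaussBinomial n (k + 1) = 0
      rw [ih k (by omega), ih (k + 1) (by omega)]
      ring

private lemma gauss_eq_gbSum : ∀ n k : ℕ, k ≤ n → gaussBinomial n k = gbSum k (n - k) := by
  intro n
  induction n with
  | zero =>
    intro k hk
    obtain rfl : k = 0 := by omega
    rw [gbSum_left_zero]
    rfl
  | succ n ih =>
    intro k hk
    cases k with
    | zero =>
      rw [gbSum_left_zero]
      rfl
    | succ k =>
      show gaussBinomial n k + X ^ (k + 1) * gaussBinomial n (k + 1) = _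
      by_cases h : k + 1 ≤ n
      · rw [ih k (by omega), ih (k + 1) h]
        have e1 : n - k = (n - k - 1) + 1 := by omega
        have e2 : n - (k + 1) = n - k - 1 := by omega
        have e3 : n + 1 - (k + 1) = (n - k - 1) + 1 := by omega
        rw [e2, e3, e1]
        exact (gbSum_rec k (n - k - 1)).symm
      · obtain rfl : k = n := by omega
        rw [gauss_eq_zero k (k + 1) (by omega), ih k le_rfl]
        simp [Nat.sub_self, gbSum_right_zero]

theorem gaussBinomial_eq_sum_partitions_in_box (n k : ℕ) (hkn : k ≤ n) :
    gaussBinomial n k =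
      ∑ m ∈ Finset.range (k * (n - k) + 1),
        ((Finset.univ.filter fun p : Nat.Partition m =>
            p.parts.card ≤ k ∧ ∀ x ∈ p.parts, x ≤ n - k).card : Polynomial ℤ) * X ^ m :=
  gauss_eq_gbSum n k hkn
end
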